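/- For the generating functions F_k of plane trees with edge labels in {+1,-1} (F_k(t, x_1,...,x_k) = sum over such labelled plane trees T of t^{|T|} prod_{i=1}^k sum_{v in T} x_i^{l(v)}, |T| = number of edges, root labelled 0), one has the recursion F_k(x) = 1 + t sum over subsets I of [k] of (prod_{i in I} x_i^{-1} + prod_{i in I} x_i) F_{|I|}(x_I) F_{|J|}(x_J), where J = [k] \ I. -/

import Mathlib

open Complex

/-- Plane trees whose edges carry labels `±1` (`true` for `+1`, `false` for `-1`):
a node together with the ordered list of its labelled subtrees.  The induced node
labelling gives the root label `0` and each child the label of its parent plus the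
edge increment; this is the family `𝒯⁽¹⁾` of labelled plane trees. -/
inductive PTree1 where
  | node : List (Bool × PTree1) → PTree1

mutual
/-- Number of edges. -/
def PTree1.edges : PTree1 → ℕ
  | .node cs => PTree1.edgesList cs
def PTree1.edgesList : List (Bool × PTree1) → ℕ
  | [] => 0
  | (_, t) :: rest => t.edges + 1 + PTree1.edgesList rest
end

mutual
/-- `∑_{v ∈ T} x^{ℓ(v)}` for the induced labelling (root labelled `0`). -/
noncomputable def PTree1.labelSum : PTree1 → ℂ → ℂ
  | .node cs, x => 1 + PTree1.labelSumList cs x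
noncomputable def PTree1.labelSumList : List (Bool × PTree1) → ℂ → ℂ
  | [], _ => 0
  | (b, t) :: rest, x =>
      (if b then x else x⁻¹) * t.labelSum x + PTree1.labelSumList rest x
end

/-!
Removing the leftmost subtree of a tree with at least one edge leaves a sign `b`, the subtree `s`
and the remaining tree `u`, with `|T| = |s| + 1 + |u|` and
`∑_{v ∈ T} x^{ℓ(v)} = x^{±1} ∑_{v ∈ s} x^{ℓ(v)} + ∑_{v ∈ u} x^{ℓ(v)}`. Expanding the product over
`i` of these binomials as a sum over subsets `I` and summing over `(b, s, u)` gives the recursion.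
The series converge absolutely: on the unit circle `|∑_{v ∈ T} x^{ℓ(v)}| ≤ |T| + 1`, the factor
`(|T| + 1)^k (8|t|)^{|T|}` is bounded, and every finite partial sum of `∑_T 8^{-|T|}` is at most
`2`, since the bound `2 = 1 + 2 · 8⁻¹ · 2²` propagates through the same decomposition.
-/

open Finset

namespace PTree1

def cons (b : Bool) (s : PTree1) : PTree1 → PTree1
  | node cs => node ((b, s) :: cs)

@[simp] lemma edges_nil : (node []).edges = 0 := rfl

@[simp] lemma edges_cons (b : Bool) (s u : PTree1) :
    (cons b s u).edges = s.edges + 1 + u.edges := by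
  cases u; rfl

@[simp] lemma labelSum_cons (b : Bool) (s u : PTree1) (x : ℂ) :
    (cons b s u).labelSum x = (if b then x else x⁻¹) * s.labelSum x + u.labelSum x := by
  cases u
  simp only [cons, labelSum, labelSumList]
  ring

@[elab_as_elim]
theorem cons_induction {P : PTree1 → Prop} (nil : P (node []))
    (cons : ∀ b s u, P s → P u → P (cons b s u)) : ∀ T, P T
  | node [] => nil
  | node ((b, s) :: cs) =>
      cons b s (node cs) (cons_induction nil cons s) (cons_induction nil cons (node cs))

def consEquiv : Unit ⊕ Bool × PTree1 × PTree1 ≃ PTree1 where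
  toFun := Sum.elim (fun _ => node []) fun p => cons p.1 p.2.1 p.2.2
  invFun
    | node [] => .inl ()
    | node ((b, s) :: cs) => .inr (b, s, node cs)
  left_inv := by rintro (⟨⟩ | ⟨b, s, ⟨cs⟩⟩) <;> rfl
  right_inv := by rintro ⟨_ | ⟨⟨b, s⟩, cs⟩⟩ <;> rfl

@[simp] lemma consEquiv_inl (u : Unit) : consEquiv (.inl u) = node [] := rfl

@[simp] lemma consEquiv_inr (p : Bool × PTree1 × PTree1) :
    consEquiv (.inr p) = cons p.1 p.2.1 p.2.2 := rfl

lemma norm_labelSum_le {x : ℂ} (hx : ‖x‖ = 1) (T : PTree1) :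
    ‖T.labelSum x‖ ≤ T.edges + 1 := by
  induction T using cons_induction with
  | nil => simp [labelSum, labelSumList]
  | cons b s u hs hu =>
    have hb : ‖if b then x else x⁻¹‖ = 1 := by cases b <;> simp [hx]
    calc ‖(cons b s u).labelSum x‖
        ≤ ‖if b then x else x⁻¹‖ * ‖s.labelSum x‖ + ‖u.labelSum x‖ := by
          rw [labelSum_cons, ← norm_mul]; exact norm_add_le _ _
      _ ≤ (cons b s u).edges + 1 := by rw [hb, edges_cons]; push_cast; linarith

theorem sum_inv_eight_pow_edges_le_two (S : Finset PTree1) :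
    ∑ T ∈ S, (8⁻¹ : ℝ) ^ T.edges ≤ 2 := by
  suffices h : ∀ n (S : Finset PTree1), (∀ T ∈ S, T.edges < n) →
      ∑ T ∈ S, (8⁻¹ : ℝ) ^ T.edges ≤ 2 from
    h _ S fun T hT => Nat.lt_succ_of_le (le_sup (f := edges) hT)
  classical
  intro n
  induction n with
  | zero =>
    intro S hS
    rw [eq_empty_of_forall_notMem fun T hT => Nat.not_lt_zero _ (hS T hT), sum_empty]
    norm_num
  | succ n ih =>
    intro S hS
    set U := S.map consEquiv.symm.toEmbedding
    set S₁ := U.toRight.image (·.2.1)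
    set S₂ := U.toRight.image (·.2.2)
    have hU : ∀ p ∈ U.toRight, p.2.1.edges < n ∧ p.2.2.edges < n := fun p hp => by
      have := hS (consEquiv (.inr p)) (by simpa [U] using hp)
      rw [consEquiv_inr, edges_cons] at this
      omega
    have hS₁ : ∑ s ∈ S₁, (8⁻¹ : ℝ) ^ s.edges ≤ 2 :=
      ih _ fun s hs => by obtain ⟨p, hp, rfl⟩ := mem_image.1 hs; exact (hU p hp).1
    have hS₂ : ∑ u ∈ S₂, (8⁻¹ : ℝ) ^ u.edges ≤ 2 :=
      ih _ fun u hu => by obtain ⟨p, hp, rfl⟩ := mem_image.1 hu; exact (hU p hp).2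
    have hsub : U.toRight ⊆ univ ×ˢ S₁ ×ˢ S₂ := fun p hp => by
      simp only [mem_product, mem_univ, true_and, S₁, S₂]
      exact ⟨mem_image_of_mem _ hp, mem_image_of_mem _ hp⟩
    calc ∑ T ∈ S, (8⁻¹ : ℝ) ^ T.edges
        = ∑ o ∈ U, (8⁻¹ : ℝ) ^ (consEquiv o).edges := by simp [U, sum_map]
      _ = ∑ _u ∈ U.toLeft, 1 + ∑ p ∈ U.toRight, 8⁻¹ ^ p.2.1.edges * 8⁻¹ * 8⁻¹ ^ p.2.2.edges := by
          simp only [sum_sum_eq_sum_toLeft_add_sum_toRight, consEquiv_inl, consEquiv_inr,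
            edges_nil, edges_cons, pow_zero, pow_add, pow_one]
      _ ≤ ∑ _u : Unit, 1 + ∑ p ∈ univ ×ˢ S₁ ×ˢ S₂, 8⁻¹ ^ p.2.1.edges * 8⁻¹ * 8⁻¹ ^ p.2.2.edges := by
          gcongr
          exact subset_univ _
      _ = 1 + 2 * 8⁻¹ * ((∑ s ∈ S₁, 8⁻¹ ^ s.edges) * ∑ u ∈ S₂, 8⁻¹ ^ u.edges) := by
          simp only [sum_product, sum_const, card_univ, Fintype.card_unit, Fintype.card_bool,
            ← sum_mul_sum, ← sum_mul, one_smul, nsmul_eq_mul, Nat.cast_ofNat]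
          ring
      _ ≤ 1 + 2 * 8⁻¹ * (2 * 2) := by gcongr
      _ = 2 := by norm_num

theorem summable_inv_eight_pow_edges : Summable fun T : PTree1 => (8⁻¹ : ℝ) ^ T.edges :=
  summable_of_sum_le (fun _ => by positivity) sum_inv_eight_pow_edges_le_two

lemma summable_add_one_pow_mul_geometric (k : ℕ) {q : ℝ} (hq₀ : 0 ≤ q) (hq₁ : q < 1) :
    Summable fun n : ℕ => ((n : ℝ) + 1) ^ k * q ^ n := by
  refine (summable_descFactorial_mul_geometric_of_norm_lt_one k
    (by rwa [Real.norm_of_nonneg hq₀])).of_nonneg_of_le (fun _ => by positivity) fun n => ?_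
  gcongr
  have := Nat.pow_sub_le_descFactorial (n + k) k
  rw [Nat.add_right_comm, Nat.add_sub_cancel] at this
  exact_mod_cast this

variable {ι : Type*}

/-- `∑' T, weight t x I T` is the paper's `F_{|I|}(t, x_I)`. -/
noncomputable def weight (t : ℂ) (x : ι → ℂ) (I : Finset ι) (T : PTree1) : ℂ :=
  t ^ T.edges * ∏ i ∈ I, T.labelSum (x i)

lemma norm_weight_le {t : ℂ} {x : ι → ℂ} (hx : ∀ i, ‖x i‖ = 1) (I : Finset ι) (T : PTree1) :
    ‖weight t x I T‖ ≤ ‖t‖ ^ T.edges * ((T.edges : ℝ) + 1) ^ #I := by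
  rw [weight, norm_mul, norm_pow, norm_prod, ← prod_const]
  gcongr with i
  exact norm_labelSum_le (hx i) T

theorem summable_norm_weight {t : ℂ} (ht : ‖t‖ < 8⁻¹) {x : ι → ℂ} (hx : ∀ i, ‖x i‖ = 1)
    (I : Finset ι) : Summable fun T => ‖weight t x I T‖ := by
  have hq := summable_add_one_pow_mul_geometric #I (by positivity : 0 ≤ 8 * ‖t‖) (by linarith)
  refine (summable_inv_eight_pow_edges.mul_left (∑' n : ℕ, ((n : ℝ) + 1) ^ #I * (8 * ‖t‖) ^ n))
    |>.of_nonneg_of_le (fun _ => norm_nonneg _) fun T => ?_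
  calc ‖weight t x I T‖ ≤ ‖t‖ ^ T.edges * ((T.edges : ℝ) + 1) ^ #I := norm_weight_le hx I T
    _ = ((T.edges + 1) ^ #I * (8 * ‖t‖) ^ T.edges) * 8⁻¹ ^ T.edges := by
        rw [mul_comm, mul_assoc, ← mul_pow, mul_right_comm, mul_inv_cancel₀ (by norm_num), one_mul]
    _ ≤ _ := by gcongr; exact hq.le_tsum _ fun _ _ => by positivity

@[simp] lemma weight_nil (t : ℂ) (x : ι → ℂ) (I : Finset ι) : weight t x I (node []) = 1 := by
  simp [weight, labelSum, labelSumList]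

lemma weight_cons [Fintype ι] [DecidableEq ι] (t : ℂ) (x : ι → ℂ) (b : Bool) (s u : PTree1) :
    weight t x univ (cons b s u) = ∑ I, t * ((∏ i ∈ I, if b then x i else (x i)⁻¹)
      * (weight t x I s * weight t x Iᶜ u)) := by
  simp only [weight, edges_cons, labelSum_cons]
  rw [Fintype.prod_add, mul_sum]
  refine sum_congr rfl fun I _ => ?_
  rw [prod_mul_distrib, pow_add, pow_add, pow_one]
  ring

theorem hasSum_weight_univ [Fintype ι] [DecidableEq ι] {t : ℂ} (ht : ‖t‖ < 8⁻¹) {x : ι → ℂ}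
    (hx : ∀ i, ‖x i‖ = 1) :
    HasSum (weight t x univ) (1 + t * ∑ I, ((∏ i ∈ I, (x i)⁻¹) + ∏ i ∈ I, x i)
      * (∑' T, weight t x I T) * (∑' T, weight t x Iᶜ T)) := by
  have hw := summable_norm_weight ht hx
  have hI (I : Finset ι) : HasSum (fun p : Bool × PTree1 × PTree1 =>
      t * ((∏ i ∈ I, if p.1 then x i else (x i)⁻¹) * (weight t x I p.2.1 * weight t x Iᶜ p.2.2)))
      (t * (((∏ i ∈ I, (x i)⁻¹) + ∏ i ∈ I, x i)
        * (∑' T, weight t x I T) * ∑' T, weight t x Iᶜ T)) := by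
    have hsigns := hasSum_fintype fun b : Bool => ∏ i ∈ I, if b then x i else (x i)⁻¹
    simp only [Fintype.sum_bool, if_true, Bool.false_eq_true, if_false] at hsigns
    rw [add_comm] at hsigns
    have hpairs : HasSum (fun z : PTree1 × PTree1 => weight t x I z.1 * weight t x Iᶜ z.2)
        ((∑' T, weight t x I T) * ∑' T, weight t x Iᶜ T) :=
      (hw I).of_norm.hasSum.mul (hw Iᶜ).of_norm.hasSum
        (summable_mul_of_summable_norm (hw I) (hw Iᶜ))
    have hsummable : Summable fun p : Bool × PTree1 × PTree1 =>
        (∏ i ∈ I, if p.1 then x i else (x i)⁻¹) * (weight t x I p.2.1 * weight t x Iᶜ p.2.2) :=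
      summable_mul_of_summable_norm (f := fun b : Bool => ∏ i ∈ I, if b then x i else (x i)⁻¹)
        (g := fun z : PTree1 × PTree1 => weight t x I z.1 * weight t x Iᶜ z.2)
        Summable.of_finite ((hw I).mul_norm (hw Iᶜ))
    rw [mul_assoc]
    exact (hsigns.mul hpairs hsummable).mul_left t
  rw [← consEquiv.hasSum_iff]
  refine .sum ?_ ?_
  · simpa using hasSum_unique ((weight t x univ ∘ consEquiv) ∘ Sum.inl)
  · have hcons : (weight t x univ ∘ consEquiv) ∘ Sum.inr = fun p : Bool × PTree1 × PTree1 =>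
        ∑ I, t * ((∏ i ∈ I, if p.1 then x i else (x i)⁻¹)
          * (weight t x I p.2.1 * weight t x Iᶜ p.2.2)) :=
      funext fun p => weight_cons t x p.1 p.2.1 p.2.2
    rw [hcons, mul_sum]
    exact hasSum_sum fun I _ => hI I

end PTree1

/-- The recursion for the generating functions
`F_k(t,x₁,…,x_k) = ∑_T t^{|T|} ∏_{i=1}^k ∑_{v∈T} x_i^{ℓ(v)}` of plane trees with
edge increments `±1`:
`F_k(x) = 1 + t ∑_{I ⊆ [k]} (∏_{i∈I} x_i⁻¹ + ∏_{i∈I} x_i) F_{|I|}(x_I) F_{|J|}(x_J)`,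
with `J = [k] ∖ I`. -/
theorem Fk_plane_pm1_recursion (k : ℕ) (x : Fin k → ℂ) (hx : ∀ i, ‖x i‖ = 1)
    (t : ℝ) (ht0 : 0 < t) (ht : t < 1/8) :
    (∑' T : PTree1, (t : ℂ)^T.edges * ∏ i : Fin k, T.labelSum (x i))
    = 1 + t * ∑ I : Finset (Fin k),
        ((∏ i ∈ I, (x i)⁻¹) + ∏ i ∈ I, x i)
        * (∑' T : PTree1, (t : ℂ)^T.edges * ∏ i ∈ I, T.labelSum (x i))
        * (∑' T : PTree1, (t : ℂ)^T.edges * ∏ i ∈ Iᶜ, T.labelSum (x i)) := by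
  have ht' : ‖(t : ℂ)‖ < 8⁻¹ := by
    rw [norm_real, Real.norm_of_nonneg ht0.le]
    linarith
  exact (PTree1.hasSum_weight_univ ht' hx).tsum_eq
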